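/- Let F : C → D be a multifunctor between closed multicategories. Then the object map X ↦ FX together with the closing transformations F̲_{X;Y} : FC̲(X;Y) → D̲(FX;FY) defines a D-functor F̲ : F_*C̲ → D̲; in particular F(1^{C̲}_X) · F̲_{X,X} = 1^{D̲}_{FX} and F(μ_{C̲}) · F̲_{X,Z} = (F̲_{X,Y}, F̲_{Y,Z}) · μ_{D̲}. -/

import Mathlib

/-!
Two morphisms into an internal hom agree as soon as they agree after evaluation, i.e. after
`(1, -) · ev`. Evaluating either side of the two identities and using associativity, the
defining property `(1, F̲) · ev^D = F(ev^C)` of the closing transformation turns each side into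
`F` of an evaluated identity of `C̲`, namely `(1, 1̲_X) · ev = 1_X` and
`(1, μ) · ev_{X;Z} = (ev_{X;Y}, 1) · ev_{Y;Z}`, and `F` preserves these because it preserves
composition and identities.
-/

universe u v

/-- A family of multimorphisms `f_i : Xss_i → Ys_i` (with matching lengths),
used to express simultaneous composition in a multicategory. -/
inductive HomFam (Obj : Type u) (Hom : List Obj → Obj → Type v) :
    List (List Obj) → List Obj → Type (max u v)
  | nil : HomFam Obj Hom [] []
  | cons {Xs Y Xss Ys} : Hom Xs Y → HomFam Obj Hom Xss Ys →
      HomFam Obj Hom (Xs :: Xss) (Y :: Ys)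

/-- A family of families of multimorphisms. -/
inductive FamFam (Obj : Type u) (Hom : List Obj → Obj → Type v) :
    List (List (List Obj)) → List (List Obj) → Type (max u v)
  | nil : FamFam Obj Hom [] []
  | cons {Xss Ys Xsss Yss} : HomFam Obj Hom Xss Ys → FamFam Obj Hom Xsss Yss →
      FamFam Obj Hom (Xss :: Xsss) (Ys :: Yss)

variable {Obj : Type u} {Hom : List Obj → Obj → Type v}

/-- The family of identities on a list of objects. -/
def idFam (ident : ∀ X, Hom [X] X) : ∀ Ys : List Obj,
    HomFam Obj Hom (Ys.map fun y => [y]) Ys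
  | [] => .nil
  | y :: ys => .cons (ident y) (idFam ident ys)

/-- Concatenation of families. -/
def appendFam : ∀ {A B C D}, HomFam Obj Hom A B → HomFam Obj Hom C D →
    HomFam Obj Hom (A ++ C) (B ++ D)
  | _, _, _, _, .nil, t => t
  | _, _, _, _, .cons f fs, t => .cons f (appendFam fs t)

/-- Flattening a family of families. -/
def flattenFam : ∀ {Xsss Yss}, FamFam Obj Hom Xsss Yss →
    HomFam Obj Hom Xsss.flatten Yss.flatten
  | _, _, .nil => .nil
  | _, _, .cons fs fss => appendFam fs (flattenFam fss)

/-- Componentwise composition of a family of families with a family. -/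
def zipComp
    (comp : ∀ {Xss Ys Z}, HomFam Obj Hom Xss Ys → Hom Ys Z → Hom Xss.flatten Z) :
    ∀ {Xsss Yss Zs}, FamFam Obj Hom Xsss Yss → HomFam Obj Hom Yss Zs →
      HomFam Obj Hom (Xsss.map List.flatten) Zs
  | _, _, _, .nil, .nil => .nil
  | _, _, _, .cons fs fss, .cons g gs => .cons (comp fs g) (zipComp comp fss gs)

/-- A multicategory: objects, multimorphisms `X₁,…,Xₙ → Y`, identities and an
associative and unital simultaneous composition `(f₁,…,fₙ) · g`. -/
structure Multicategory : Type (max (u + 1) (v + 1)) where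
  Obj : Type u
  Hom : List Obj → Obj → Type v
  ident : ∀ X : Obj, Hom [X] X
  comp : ∀ {Xss : List (List Obj)} {Ys : List Obj} {Z : Obj},
    HomFam Obj Hom Xss Ys → Hom Ys Z → Hom Xss.flatten Z
  id_comp : ∀ {Ys Z} (g : Hom Ys Z), HEq (comp (idFam ident Ys) g) g
  comp_id : ∀ {Xs Y} (f : Hom Xs Y), HEq (comp (.cons f .nil) (ident Y)) f
  assoc : ∀ {Xsss Yss Zs Z} (fss : FamFam Obj Hom Xsss Yss)
    (gs : HomFam Obj Hom Yss Zs) (h : Hom Zs Z),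
    HEq (comp (zipComp (fun fs g => comp fs g) fss gs) h)
        (comp (flattenFam fss) (comp gs h))

namespace Multicategory

variable (M : Multicategory.{u, v})

theorem map_singleton_flatten (l : List M.Obj) :
    (l.map fun x => [x]).flatten = l := by
  induction l <;> simp_all

theorem sflat (Xs Ys : List M.Obj) :
    ((Xs.map fun x => [x]) ++ [Ys]).flatten = Xs ++ Ys := by
  induction Xs <;> simp_all

theorem sflat2 (Xs Γ : List M.Obj) :
    (Xs :: (Γ.map fun x => [x])).flatten = Xs ++ Γ := by
  simp [List.flatten_cons, map_singleton_flatten]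

/-- `(1,…,1,f) · g` : plugging `f` into the last argument of `g`. -/
def plug {Xs Ys : List M.Obj} {H Z : M.Obj} (f : M.Hom Ys H)
    (g : M.Hom (Xs ++ [H]) Z) : M.Hom (Xs ++ Ys) Z :=
  cast (congrArg (M.Hom · Z) (M.sflat Xs Ys))
    (M.comp (appendFam (idFam M.ident Xs) (.cons f .nil)) g)

/-- `(f,1,…,1) · g` : plugging `f` into the first argument of `g`. -/
def plugFirst {Xs Γ : List M.Obj} {Y Z : M.Obj} (f : M.Hom Xs Y)
    (g : M.Hom (Y :: Γ) Z) : M.Hom (Xs ++ Γ) Z :=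
  cast (congrArg (M.Hom · Z) (M.sflat2 Xs Γ))
    (M.comp (.cons f (idFam M.ident Γ)) g)

/-- `(f) · h` : composing a multimorphism with a unary morphism. -/
def postcomp {Γ : List M.Obj} {Y Z : M.Obj} (f : M.Hom Γ Y) (h : M.Hom [Y] Z) :
    M.Hom Γ Z :=
  cast (congrArg (M.Hom · Z) (by simp : ([Γ].flatten : List M.Obj) = Γ))
    (M.comp (.cons f .nil) h)

/-- Composition in the underlying category. -/
def comp1 {X Y Z : M.Obj} (f : M.Hom [X] Y) (g : M.Hom [Y] Z) : M.Hom [X] Z :=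
  M.postcomp f g

/-- `(a, b) · g` : binary simultaneous composition. -/
def pair {As Bs : List M.Obj} {A' B' Cc : M.Obj} (a : M.Hom As A') (b : M.Hom Bs B')
    (g : M.Hom [A', B'] Cc) : M.Hom (As ++ Bs) Cc :=
  cast (congrArg (M.Hom · Cc) (by simp : ([As, Bs].flatten : List M.Obj) = As ++ Bs))
    (M.comp (.cons a (.cons b .nil)) g)

/-- `(f₁,…,fₘ,1) · g` for a family of unary morphisms `fᵢ`. -/
def sideComp {As Bs : List M.Obj} (fs : HomFam M.Obj M.Hom (As.map fun a => [a]) Bs)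
    {H Z : M.Obj} (g : M.Hom (Bs ++ [H]) Z) : M.Hom (As ++ [H]) Z :=
  cast (congrArg (M.Hom · Z) (M.sflat As [H]))
    (M.comp (appendFam fs (.cons (M.ident H) .nil)) g)

end Multicategory

/-- The image of a family of multimorphisms under a multifunctor. -/
def mapFam {M N : Multicategory.{u, v}} (obj : M.Obj → N.Obj)
    (map : ∀ {Xs Y}, M.Hom Xs Y → N.Hom (Xs.map obj) (obj Y)) :
    ∀ {Xss Ys}, HomFam M.Obj M.Hom Xss Ys →
      HomFam N.Obj N.Hom (Xss.map (List.map obj)) (Ys.map obj)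
  | _, _, .nil => .nil
  | _, _, .cons f fs => .cons (map f) (mapFam obj @map fs)

/-- A multifunctor between multicategories. -/
structure Multifunctor (M N : Multicategory.{u, v}) : Type (max u v) where
  obj : M.Obj → N.Obj
  map : ∀ {Xs Y}, M.Hom Xs Y → N.Hom (Xs.map obj) (obj Y)
  map_ident : ∀ X, map (M.ident X) = N.ident (obj X)
  map_comp : ∀ {Xss Ys Z} (fs : HomFam M.Obj M.Hom Xss Ys) (g : M.Hom Ys Z),
    HEq (map (M.comp fs g)) (N.comp (mapFam obj @map fs) (map g))

/-- A closed multicategory : a multicategory together with internal hom objects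
and evaluation morphisms such that `φ : f ↦ (1,…,1,f)·ev` is a bijection. -/
structure ClosedMulticategory extends Multicategory.{u, v} where
  ihom : List Obj → Obj → Obj
  ev : ∀ (Xs : List Obj) (Z : Obj), Hom (Xs ++ [ihom Xs Z]) Z
  closed : ∀ (Xs Ys : List Obj) (Z : Obj),
    Function.Bijective
      (fun f : Hom Ys (ihom Xs Z) => toMulticategory.plug f (ev Xs Z))

namespace ClosedMulticategory

variable (C : ClosedMulticategory.{u, v})

/-- The inverse of the bijection `φ` : currying. -/
noncomputable def curry {Xs Ys : List C.Obj} {Z : C.Obj}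
    (f : C.Hom (Xs ++ Ys) Z) : C.Hom Ys (C.ihom Xs Z) :=
  (Equiv.ofBijective _ (C.closed Xs Ys Z)).symm f

/-- The covariant action `C̲(W₁,…,Wₘ; h)` of a unary morphism `h` on internal
homs, defined by `(1,…,1,C̲(Ws;h)) · ev_{Ws;B} = ev_{Ws;A} · h`. -/
noncomputable def homCovM (Ws : List C.Obj) {A B : C.Obj} (h : C.Hom [A] B) :
    C.Hom [C.ihom Ws A] (C.ihom Ws B) :=
  C.curry (Xs := Ws) (C.toMulticategory.postcomp (C.ev Ws A) h)

/-- The contravariant action `C̲(h; Z)` of a unary morphism `h : A → B` on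
internal homs, defined by `(1,C̲(h;Z)) · ev_{A;Z} = (h,1) · ev_{B;Z}`. -/
noncomputable def homContra {A B : C.Obj} (h : C.Hom [A] B) (Z : C.Obj) :
    C.Hom [C.ihom [B] Z] (C.ihom [A] Z) :=
  C.curry (Xs := [A]) (C.toMulticategory.plugFirst h (C.ev [B] Z))

/-- The contravariant action `C̲(f₁,…,fₘ; Z)` of a family of unary morphisms on
internal homs. -/
noncomputable def homContraM {As Bs : List C.Obj}
    (fs : HomFam C.Obj C.Hom (As.map fun a => [a]) Bs) (Z : C.Obj) :
    C.Hom [C.ihom Bs Z] (C.ihom As Z) :=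
  C.curry (Xs := As) (C.toMulticategory.sideComp fs (C.ev Bs Z))

/-- Composition `μ` of the `C`-category `C̲`, determined by
`(1_X, μ)·ev_{X;Z} = (ev_{X;Y},1)·ev_{Y;Z}`. -/
noncomputable def mu (X Y Z : C.Obj) :
    C.Hom [C.ihom [X] Y, C.ihom [Y] Z] (C.ihom [X] Z) :=
  C.curry (Xs := [X])
    (C.toMulticategory.plugFirst (Xs := [X, C.ihom [X] Y]) (Γ := [C.ihom [Y] Z])
      (C.ev [X] Y) (C.ev [Y] Z))

/-- The identity `⟨1_X⟩ : () → C̲(X;X)` of the `C`-category `C̲`. -/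
noncomputable def oneHom (X : C.Obj) : C.Hom [] (C.ihom [X] X) :=
  C.curry (Xs := [X]) (Ys := []) (C.ident X)

/-- The morphism `L^X_{YZ} : C̲(Y;Z) → C̲(C̲(X;Y);C̲(X;Z))`, uniquely determined
by `(1, L^X_{YZ}) · ev = μ`. -/
noncomputable def Lhat (X Y Z : C.Obj) :
    C.Hom [C.ihom [Y] Z] (C.ihom [C.ihom [X] Y] (C.ihom [X] Z)) :=
  C.curry (Xs := [C.ihom [X] Y]) (C.mu X Y Z)

/-- The action `C̲(u;1) : C̲(1;X) → C̲(;X) = X` of a nullary morphism `u`. -/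
def uAct {one : C.Obj} (u : C.Hom [] one) (X : C.Obj) :
    C.Hom [C.ihom [one] X] X :=
  C.toMulticategory.plugFirst u (C.ev [one] X)

/-- `(one, u)` is a unit object of the closed multicategory `C` if all the
morphisms `C̲(u;1) : C̲(1;X) → X` are invertible. -/
def IsUnitObj (one : C.Obj) (u : C.Hom [] one) : Prop :=
  ∀ X : C.Obj, ∃ inv : C.Hom [X] (C.ihom [one] X),
    C.toMulticategory.comp1 (C.uAct u X) inv = C.ident (C.ihom [one] X) ∧
    C.toMulticategory.comp1 inv (C.uAct u X) = C.ident X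

end ClosedMulticategory

/-- The closing transformation `F̲_{Xs;Z} : F C̲(Xs;Z) → D̲(F Xs; FZ)` of a
multifunctor between closed multicategories, i.e. the unique morphism with
`(1,…,1,F̲) · ev^D = F(ev^C)`. -/
noncomputable def closingTrans {C D : ClosedMulticategory.{u, v}}
    (F : Multifunctor C.toMulticategory D.toMulticategory)
    (Xs : List C.Obj) (Z : C.Obj) :
    D.Hom [F.obj (C.ihom Xs Z)] (D.ihom (Xs.map F.obj) (F.obj Z)) :=
  D.curry (Xs := Xs.map F.obj)
    (cast (congrArg (D.Hom · (F.obj Z)) (List.map_append : List.map F.obj (Xs ++ [C.ihom Xs Z]) = List.map F.obj Xs ++ List.map F.obj [C.ihom Xs Z]))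
      (F.map (C.ev Xs Z)))

namespace Multicategory

variable (M : Multicategory.{u, v})

theorem comp_cons_cons_heq_congr {Xs Xs' Ys Ys' : List M.Obj} {A B Z : M.Obj}
    {f : M.Hom Xs A} {f' : M.Hom Xs' A} {g : M.Hom Ys B} {g' : M.Hom Ys' B}
    (hX : Xs = Xs') (hY : Ys = Ys') (hf : f ≍ f') (hg : g ≍ g') (m : M.Hom [A, B] Z) :
    M.comp (.cons f (.cons g .nil)) m ≍ M.comp (.cons f' (.cons g' .nil)) m := by
  subst hX hY; cases hf; cases hg; rfl

theorem postcomp_ident {Γ : List M.Obj} {Y : M.Obj} (f : M.Hom Γ Y) :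
    M.postcomp f (M.ident Y) = f :=
  eq_of_heq ((cast_heq _ _).trans (M.comp_id f))

theorem ident_postcomp {X Y : M.Obj} (f : M.Hom [X] Y) : M.postcomp (M.ident X) f = f :=
  eq_of_heq ((cast_heq _ _).trans (M.id_comp f))

theorem pair_postcomp_postcomp {As Bs : List M.Obj} {A A' B B' C : M.Obj}
    (a : M.Hom As A) (h : M.Hom [A] A') (b : M.Hom Bs B) (k : M.Hom [B] B')
    (g : M.Hom [A', B'] C) :
    M.pair (M.postcomp a h) (M.postcomp b k) g = M.pair a b (M.pair h k g) := by
  apply eq_of_heq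
  refine ((cast_heq _ _).trans ?_).trans (cast_heq _ _).symm
  refine .trans
    (M.comp_cons_cons_heq_congr (by simp) (by simp) (cast_heq _ _) (cast_heq _ _) g) ?_
  exact M.assoc (.cons (.cons a .nil) (.cons (.cons b .nil) .nil)) (.cons h (.cons k .nil)) g

theorem pair_pair_heq_of_pair_ident_eq {Xs As Bs : List M.Obj} {X A B P Y Z : M.Obj}
    (x : M.Hom Xs X) (a : M.Hom As A) (b : M.Hom Bs B) (m : M.Hom [A, B] P)
    (g : M.Hom [X, P] Z) (e : M.Hom [X, A] Y) (g' : M.Hom [Y, B] Z)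
    (h : M.pair (M.ident X) m g = M.pair e (M.ident B) g') :
    M.pair x (M.pair a b m) g ≍ M.pair (M.pair x a e) b g' := by
  have h' : M.comp (.cons (M.ident X) (.cons m .nil)) g
      = M.comp (.cons e (.cons (M.ident B) .nil)) g' := h
  refine ((cast_heq _ _).trans ?_).trans (cast_heq _ _).symm
  refine .trans
    (M.comp_cons_cons_heq_congr (by simp) (by simp) (M.comp_id x).symm (cast_heq _ _) g) ?_
  refine .trans (M.assoc (.cons (.cons x .nil) (.cons (.cons a (.cons b .nil)) .nil))
    (.cons (M.ident X) (.cons m .nil)) g) ?_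
  rw [h']
  refine .trans (M.assoc (.cons (.cons x (.cons a .nil)) (.cons (.cons b .nil) .nil))
    (.cons e (.cons (M.ident B) .nil)) g').symm ?_
  exact M.comp_cons_cons_heq_congr (by simp) (by simp) (cast_heq _ _).symm (M.comp_id b) g'

end Multicategory

namespace Multifunctor

variable {M N : Multicategory.{u, v}} (F : Multifunctor M N)

theorem map_heq_congr {Xs Xs' : List M.Obj} {Y : M.Obj} {f : M.Hom Xs Y} {f' : M.Hom Xs' Y}
    (hX : Xs = Xs') (hf : f ≍ f') : F.map f ≍ F.map f' := by
  subst hX; cases hf; rfl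

theorem map_pair {As Bs : List M.Obj} {A B C : M.Obj} (a : M.Hom As A) (b : M.Hom Bs B)
    (g : M.Hom [A, B] C) :
    F.map (M.pair a b g) ≍ N.pair (F.map a) (F.map b) (F.map g) :=
  ((F.map_heq_congr (by simp) (cast_heq _ _)).trans (F.map_comp _ g)).trans
    (cast_heq _ _).symm

end Multifunctor

namespace ClosedMulticategory

variable (C : ClosedMulticategory.{u, v})

theorem plug_curry {Xs Ys : List C.Obj} {Z : C.Obj} (f : C.Hom (Xs ++ Ys) Z) :
    C.plug (C.curry f) (C.ev Xs Z) = f :=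
  (Equiv.ofBijective _ (C.closed Xs Ys Z)).apply_symm_apply f

theorem plug_injective {Xs Ys : List C.Obj} {Z : C.Obj} {f g : C.Hom Ys (C.ihom Xs Z)}
    (h : C.plug f (C.ev Xs Z) = C.plug g (C.ev Xs Z)) : f = g :=
  (C.closed Xs Ys Z).injective h

/- For a single object `X`, `plug (Xs := [X]) f g` and `plugFirst (Γ := [B]) f g` unfold
definitionally to `pair (ident X) f g` and `pair f (ident B) g`; this is what lets `plug_curry`
and the `rfl` steps below speak about `pair`. -/
theorem pair_ident_oneHom_ev (X : C.Obj) :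
    C.pair (C.ident X) (C.oneHom X) (C.ev [X] X) = C.ident X :=
  C.plug_curry (Xs := [X]) (Ys := []) (C.ident X)

theorem pair_ident_mu_ev (X Y Z : C.Obj) :
    C.pair (C.ident X) (C.mu X Y Z) (C.ev [X] Z)
      = C.pair (C.ev [X] Y) (C.ident (C.ihom [Y] Z)) (C.ev [Y] Z) :=
  C.plug_curry (Xs := [X]) _

end ClosedMulticategory

open ClosedMulticategory

section closingTrans

variable {C D : ClosedMulticategory.{u, v}}
  (F : Multifunctor C.toMulticategory D.toMulticategory)

theorem plug_closingTrans_heq (Xs : List C.Obj) (Z : C.Obj) :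
    D.plug (closingTrans F Xs Z) (D.ev (Xs.map F.obj) (F.obj Z)) ≍ F.map (C.ev Xs Z) :=
  (heq_of_eq (D.plug_curry _)).trans (cast_heq _ _)

theorem pair_ident_closingTrans_ev (X Z : C.Obj) :
    D.pair (D.ident (F.obj X)) (closingTrans F [X] Z) (D.ev [F.obj X] (F.obj Z))
      = F.map (C.ev [X] Z) :=
  eq_of_heq (plug_closingTrans_heq F [X] Z)

theorem postcomp_map_oneHom_closingTrans (X : C.Obj) :
    D.postcomp (F.map (C.oneHom X)) (closingTrans F [X] X) = D.oneHom (F.obj X) := by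
  apply D.plug_injective (Xs := [F.obj X])
  calc D.plug (D.postcomp (F.map (C.oneHom X)) (closingTrans F [X] X))
        (D.ev [F.obj X] (F.obj X))
      = D.pair (D.postcomp (D.ident (F.obj X)) (D.ident (F.obj X)))
          (D.postcomp (F.map (C.oneHom X)) (closingTrans F [X] X))
          (D.ev [F.obj X] (F.obj X)) := by
        rw [D.postcomp_ident]; rfl
    _ = D.pair (D.ident (F.obj X)) (F.map (C.oneHom X)) (F.map (C.ev [X] X)) := by
        rw [D.pair_postcomp_postcomp, pair_ident_closingTrans_ev]
    _ = F.map (C.pair (C.ident X) (C.oneHom X) (C.ev [X] X)) := by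
        rw [← F.map_ident]; exact eq_of_heq (F.map_pair _ _ _).symm
    _ = D.plug (D.oneHom (F.obj X)) (D.ev [F.obj X] (F.obj X)) := by
        rw [C.pair_ident_oneHom_ev, F.map_ident, oneHom, D.plug_curry]

theorem postcomp_map_mu_closingTrans (X Y Z : C.Obj) :
    D.postcomp (F.map (C.mu X Y Z)) (closingTrans F [X] Z)
      = D.pair (closingTrans F [X] Y) (closingTrans F [Y] Z)
          (D.mu (F.obj X) (F.obj Y) (F.obj Z)) := by
  apply D.plug_injective (Xs := [F.obj X])
  calc D.plug (D.postcomp (F.map (C.mu X Y Z)) (closingTrans F [X] Z))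
        (D.ev [F.obj X] (F.obj Z))
      = D.pair (D.postcomp (D.ident (F.obj X)) (D.ident (F.obj X)))
          (D.postcomp (F.map (C.mu X Y Z)) (closingTrans F [X] Z))
          (D.ev [F.obj X] (F.obj Z)) := by
        rw [D.postcomp_ident]; rfl
    _ = D.pair (D.ident (F.obj X)) (F.map (C.mu X Y Z)) (F.map (C.ev [X] Z)) := by
        rw [D.pair_postcomp_postcomp, pair_ident_closingTrans_ev]
    _ = F.map (C.pair (C.ev [X] Y) (C.ident (C.ihom [Y] Z)) (C.ev [Y] Z)) := by
        rw [← C.pair_ident_mu_ev, ← F.map_ident]; exact eq_of_heq (F.map_pair _ _ _).symm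
    _ = D.pair (D.postcomp (F.map (C.ev [X] Y)) (D.ident _))
          (D.postcomp (D.ident _) (closingTrans F [Y] Z)) (D.ev [F.obj Y] (F.obj Z)) := by
        rw [D.pair_postcomp_postcomp, pair_ident_closingTrans_ev, ← F.map_ident]
        exact eq_of_heq (F.map_pair _ _ _)
    _ = D.pair (D.pair (D.ident (F.obj X)) (closingTrans F [X] Y) (D.ev [F.obj X] (F.obj Y)))
          (closingTrans F [Y] Z) (D.ev [F.obj Y] (F.obj Z)) := by
        rw [D.postcomp_ident, D.ident_postcomp, pair_ident_closingTrans_ev]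
    _ = D.plug (D.pair (closingTrans F [X] Y) (closingTrans F [Y] Z)
          (D.mu (F.obj X) (F.obj Y) (F.obj Z))) (D.ev [F.obj X] (F.obj Z)) :=
        eq_of_heq (D.pair_pair_heq_of_pair_ident_eq _ _ _ _ _ _ _ (D.pair_ident_mu_ev _ _ _)).symm

end closingTrans

/-- Let `F : C → D` be a multifunctor between closed
multicategories. Then `X ↦ FX` together with the closing transformations
`F̲_{X;Y} : F C̲(X;Y) → D̲(FX;FY)` defines a `D`-functor `F̲ : F_*C̲ → D̲`:
`F(1^{C̲}_X) · F̲_{X,X} = 1^{D̲}_{FX}` and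
`F(μ_{C̲}) · F̲_{X,Z} = (F̲_{X,Y}, F̲_{Y,Z}) · μ_{D̲}`. -/
theorem closingTrans_DFunctor (C D : ClosedMulticategory.{u, v})
    (F : Multifunctor C.toMulticategory D.toMulticategory) :
    (∀ X : C.Obj,
      D.toMulticategory.postcomp (F.map (C.oneHom X)) (closingTrans F [X] X)
        = D.oneHom (F.obj X)) ∧
    (∀ X Y Z : C.Obj,
      D.toMulticategory.postcomp (F.map (C.mu X Y Z)) (closingTrans F [X] Z)
        = D.toMulticategory.pair (closingTrans F [X] Y) (closingTrans F [Y] Z)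
            (D.mu (F.obj X) (F.obj Y) (F.obj Z))) :=
  ⟨postcomp_map_oneHom_closingTrans F, postcomp_map_mu_closingTrans F⟩
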